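/- CBC construction bound: let f ∈ 𝔽₂[x] be irreducible of degree m, and suppose g* = (g_1*, ..., g_s*) is constructed component-by-component: g_1* = 1, and for d = 2,...,s, g_d* ∈ G_m minimizes B_γ((g_1*,...,g_{d-1}*, g), f) over g ∈ G_m. Then for all d ∈ {1,...,s}: B_γ((g_1*,...,g_d*), f) ≤ 2^{-m} Σ_{∅ ≠ u ⊆ [d]} γ_u (m/2)^{|u|} ∏_{i∈u}(b_i - a_i). -/

import Mathlib

open scoped Classical

/-- identification of a natural number with a polynomial over `𝔽₂` via its binary digits. -/
noncomputable def natToPoly (n : ℕ) : Polynomial (ZMod 2) :=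
  ∑ i ∈ Finset.range (Nat.size n), if Nat.testBit n i then Polynomial.X ^ i else 0

/-- `μ(k)`, the length of the binary expansion of `k`. -/
def mu (k : ℕ) : ℕ := Nat.size k

/-- the figure-of-merit `B_γ((g_1,…,g_d), f)` for the first `d` components of `g`
(with `[d]` realized as `{0, …, d-1}`). -/
noncomputable def BcritN (m : ℕ) (γ : Finset ℕ → ℝ) (a b : ℕ → ℝ)
    (f : Polynomial (ZMod 2)) (d : ℕ) (g : ℕ → ℕ) : ℝ :=
  ∑ u ∈ (Finset.range d).powerset.filter (fun u => u.Nonempty),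
    γ u * (∏ i ∈ u, (b i - a i)) *
      ∑ k ∈ u.pi fun _ => Finset.Icc 1 (2 ^ m - 1),
        if f ∣ ∑ i ∈ u.attach, natToPoly (g i.1) * natToPoly (k i.1 i.2) then
          (1 : ℝ) / 2 ^ (∑ i ∈ u.attach, mu (k i.1 i.2))
        else 0

/-!
Induction on `d`. The average of `B(d+1)` over the `2 ^ m` choices `g ∈ G_m` of the new
component `g_d` is `B(d) + 2 ^ (-m) Σ_{u ∋ d} γ_u (m/2)^|u| ∏ (b_i - a_i)`: for fixed `k_u` with
`k_d ≠ 0`, the congruence `g_u · k_u ≡ 0 (mod f)` pins down `g_d` uniquely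
(as `k_d` is invertible mod the irreducible `f`), and `Σ_{k=1}^{2^m-1} 2^{-μ(k)} = m/2` in each
coordinate. The minimiser is at most the average. At `d = 1` no `k_1` satisfies the congruence,
since `g_1 = 1` makes `g_1 k_1 = k_1` a nonzero polynomial of degree `< m`.
-/

open Polynomial Finset

lemma natToPoly_coeff (n j : ℕ) : (natToPoly n).coeff j = if n.testBit j then 1 else 0 := by
  simp only [natToPoly, finsetSum_coeff]
  rw [sum_eq_single j]
  · split_ifs <;> simp
  · intro i _ hij
    split_ifs <;> simp [coeff_X_pow, Ne.symm hij]
  · intro hj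
    simp [Nat.testBit_eq_false_of_lt (Nat.size_le.mp (not_lt.mp (by simpa using hj)))]

lemma natToPoly_injective : Function.Injective natToPoly := fun n k h =>
  Nat.eq_of_testBit_eq fun i => by
    have := congrArg (coeff · i) h
    cases hn : n.testBit i <;> cases hk : k.testBit i <;> simp [natToPoly_coeff, hn, hk] at this ⊢

lemma natToPoly_zero : natToPoly 0 = 0 := by simp [natToPoly]

lemma natToPoly_one : natToPoly 1 = 1 := by simp [natToPoly]

lemma degree_natToPoly_lt {n m : ℕ} (hn : n < 2 ^ m) : (natToPoly n).degree < m := by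
  refine degree_lt_iff_coeff_zero _ _ |>.mpr fun j hj => ?_
  rw [natToPoly_coeff, Nat.testBit_eq_false_of_lt (hn.trans_le (Nat.pow_le_pow_right two_pos
    (by exact_mod_cast hj)))]
  rfl

lemma exists_natToPoly_eq {m : ℕ} {p : (ZMod 2)[X]} (hp : p.degree < m) :
    ∃ n < 2 ^ m, natToPoly n = p := by
  let e := (degreeLTEquiv (ZMod 2) m).toEquiv
  have : Finite (degreeLT (ZMod 2) m) := .of_equiv _ e.symm
  let F : Fin (2 ^ m) → degreeLT (ZMod 2) m :=
    fun n => ⟨natToPoly n, mem_degreeLT.mpr (degree_natToPoly_lt n.2)⟩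
  have hF : Function.Injective F := fun n k h =>
    Fin.ext (natToPoly_injective (congrArg Subtype.val h))
  have hcard : Nat.card (degreeLT (ZMod 2) m) = 2 ^ m := by
    simp [Nat.card_congr e]
  obtain ⟨n, hn⟩ := (hF.bijective_of_nat_card_le (by simp [hcard])).2 ⟨p, mem_degreeLT.mpr hp⟩
  exact ⟨n, n.2, congrArg Subtype.val hn⟩

lemma Polynomial.existsUnique_degree_lt_dvd_add_mul {K : Type*} [Field K] {f c : K[X]}
    (hf : Irreducible f) (hc : ¬ f ∣ c) (A : K[X]) :
    ∃! p : K[X], p.degree < f.degree ∧ f ∣ A + p * c := by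
  obtain ⟨u, v, huv⟩ := ((hf.coprime_iff_not_dvd).mpr hc).symm
  set p₀ := -(A * u) % f
  have hp₀ : p₀.degree < f.degree ∧ f ∣ A + p₀ * c := by
    refine ⟨degree_mod_lt _ hf.ne_zero, ⟨A * v - (-(A * u) / f) * c, ?_⟩⟩
    linear_combination (-A) * huv + c * EuclideanDomain.mod_eq_sub_mul_div (-(A * u)) f
  refine ⟨p₀, hp₀, fun p ⟨hp, hdvd⟩ => ?_⟩
  have hdiff : f ∣ (p - p₀) * c := by
    convert dvd_sub hdvd hp₀.2 using 1
    ring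
  have hdvd_sub : f ∣ p - p₀ := (hf.prime.dvd_mul.mp hdiff).resolve_right hc
  exact sub_eq_zero.mp <| eq_zero_of_dvd_of_degree_lt hdvd_sub
    ((degree_sub_le _ _).trans_lt (max_lt hp hp₀.1))

section natToPoly

variable {m : ℕ} {f : (ZMod 2)[X]}

lemma not_dvd_natToPoly (hf : Irreducible f) (hdeg : f.natDegree = m) {n : ℕ}
    (hn : n ∈ Icc 1 (2 ^ m - 1)) : ¬ f ∣ natToPoly n := by
  obtain ⟨hn₁, hn₂⟩ := mem_Icc.mp hn
  refine not_dvd_of_degree_lt (fun h => ?_) ?_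
  · exact absurd (natToPoly_injective (h.trans natToPoly_zero.symm)) (by omega)
  · rw [degree_eq_natDegree hf.ne_zero, hdeg]
    exact degree_natToPoly_lt (by omega)

lemma sum_range_two_pow_ite_dvd (hf : Irreducible f) (hdeg : f.natDegree = m)
    {c : (ZMod 2)[X]} (hc : ¬ f ∣ c) (A : (ZMod 2)[X]) (x : ℝ) :
    ∑ n ∈ range (2 ^ m), (if f ∣ A + natToPoly n * c then x else 0) = x := by
  have hfdeg : f.degree = m := by rw [degree_eq_natDegree hf.ne_zero, hdeg]
  obtain ⟨p, ⟨hp, hpdvd⟩, hpuniq⟩ := existsUnique_degree_lt_dvd_add_mul hf hc A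
  obtain ⟨n₀, hn₀, rfl⟩ := exists_natToPoly_eq (hfdeg ▸ hp)
  have hsol : ∀ n ∈ range (2 ^ m), f ∣ A + natToPoly n * c ↔ n = n₀ := by
    intro n hn
    refine ⟨fun h => natToPoly_injective (hpuniq _ ⟨?_, h⟩), fun h => h ▸ hpdvd⟩
    exact hfdeg ▸ degree_natToPoly_lt (mem_range.mp hn)
  rw [sum_congr rfl fun n hn => if_congr (hsol n hn) rfl rfl, sum_ite_eq',
    if_pos (mem_range.mpr hn₀)]

end natToPoly

lemma sum_Ico_two_pow_inv_two_pow_size (n : ℕ) :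
    ∑ k ∈ Ico (2 ^ n) (2 ^ (n + 1)), (1 : ℝ) / 2 ^ k.size = 1 / 2 := by
  have hsize : ∀ k ∈ Ico (2 ^ n) (2 ^ (n + 1)), k.size = n + 1 := fun k hk => by
    obtain ⟨h₁, h₂⟩ := mem_Ico.mp hk
    exact le_antisymm (Nat.size_le.mpr h₂) (Nat.lt_size.mpr h₁)
  rw [sum_congr rfl fun k hk => by rw [hsize k hk], sum_const, Nat.card_Ico, pow_succ,
    Nat.mul_two, Nat.add_sub_cancel, nsmul_eq_mul]
  push_cast
  field_simp
  ring

lemma sum_Icc_inv_two_pow_mu (m : ℕ) :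
    ∑ k ∈ Icc 1 (2 ^ m - 1), (1 : ℝ) / 2 ^ mu k = m / 2 := by
  rw [← Ico_add_one_right_eq_Icc, Nat.sub_add_cancel Nat.one_le_two_pow]
  induction m with
  | zero => simp
  | succ n ih =>
    rw [← sum_Ico_consecutive _ Nat.one_le_two_pow (Nat.pow_le_pow_right two_pos n.le_succ), ih]
    simp only [mu, sum_Ico_two_pow_inv_two_pow_size]
    push_cast
    ring

lemma sum_pi_inv_two_pow_sum_mu (m : ℕ) (u : Finset ℕ) :
    ∑ k ∈ u.pi fun _ => Icc 1 (2 ^ m - 1), (1 : ℝ) / 2 ^ (∑ i ∈ u.attach, mu (k i.1 i.2)) =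
      ((m : ℝ) / 2) ^ u.card := by
  rw [← sum_Icc_inv_two_pow_mu, ← prod_const, prod_sum]
  refine sum_congr rfl fun k _ => ?_
  simp only [one_div, ← prod_pow_eq_pow_sum, prod_inv_distrib]

lemma sum_filter_nonempty_powerset_range_succ {M : Type*} [AddCommMonoid M]
    (t : Finset ℕ → M) (d : ℕ) :
    ∑ u ∈ (range (d + 1)).powerset.filter (fun u => u.Nonempty), t u =
      ∑ u ∈ (range d).powerset.filter (fun u => u.Nonempty), t u +
        ∑ v ∈ (range d).powerset, t (insert d v) := by
  rw [range_add_one, sum_filter, sum_filter, sum_powerset_insert notMem_range_self]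
  simp

noncomputable def dualSum (m : ℕ) (f : (ZMod 2)[X]) (u : Finset ℕ) (g : ℕ → ℕ) : ℝ :=
  ∑ k ∈ u.pi fun _ => Icc 1 (2 ^ m - 1),
    if f ∣ ∑ i ∈ u.attach, natToPoly (g i.1) * natToPoly (k i.1 i.2) then
      (1 : ℝ) / 2 ^ (∑ i ∈ u.attach, mu (k i.1 i.2))
    else 0

section dualSum

variable {m : ℕ} {f : (ZMod 2)[X]}

lemma BcritN_eq_sum_dualSum (γ : Finset ℕ → ℝ) (a b : ℕ → ℝ) (d : ℕ) (g : ℕ → ℕ) :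
    BcritN m γ a b f d g = ∑ u ∈ (range d).powerset.filter (fun u => u.Nonempty),
      γ u * (∏ i ∈ u, (b i - a i)) * dualSum m f u g := rfl

lemma dualSum_singleton_eq_zero (hf : Irreducible f) (hdeg : f.natDegree = m) {g : ℕ → ℕ}
    {i : ℕ} (hg : g i = 1) : dualSum m f {i} g = 0 := by
  refine sum_eq_zero fun k hk => if_neg ?_
  simpa [attach_eq_univ, hg, natToPoly_one] using
    not_dvd_natToPoly hf hdeg (mem_pi.mp hk i (mem_singleton_self i))

lemma BcritN_one_eq_zero (hf : Irreducible f) (hdeg : f.natDegree = m) (γ : Finset ℕ → ℝ)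
    (a b : ℕ → ℝ) {g : ℕ → ℕ} (hg : g 0 = 1) : BcritN m γ a b f 1 g = 0 := by
  rw [BcritN_eq_sum_dualSum, ← zero_add 1, sum_filter_nonempty_powerset_range_succ]
  simp [filter_singleton, dualSum_singleton_eq_zero hf hdeg hg]

lemma dualSum_update_of_notMem {u : Finset ℕ} {d : ℕ} (hd : d ∉ u) (g : ℕ → ℕ) (n : ℕ) :
    dualSum m f u (Function.update g d n) = dualSum m f u g := by
  have h : ∀ i : u, Function.update g d n i = g i := fun i =>
    Function.update_of_ne (ne_of_mem_of_not_mem i.2 hd) _ _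
  simp only [dualSum, h]

lemma sum_dualSum_update_of_mem (hf : Irreducible f) (hdeg : f.natDegree = m) {u : Finset ℕ}
    {d : ℕ} (hd : d ∈ u) (g : ℕ → ℕ) :
    ∑ n ∈ range (2 ^ m), dualSum m f u (Function.update g d n) = ((m : ℝ) / 2) ^ u.card := by
  rw [← sum_pi_inv_two_pow_sum_mu m u]
  simp only [dualSum]
  rw [sum_comm]
  refine sum_congr rfl fun k hk => ?_
  have hsplit : ∀ n, ∑ i ∈ u.attach, natToPoly (Function.update g d n i) * natToPoly (k i i.2) =
      ∑ i ∈ u.attach.erase ⟨d, hd⟩, natToPoly (g i) * natToPoly (k i i.2) +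
        natToPoly n * natToPoly (k d hd) := by
    intro n
    rw [← sum_erase_add _ _ (mem_attach u ⟨d, hd⟩)]
    refine congrArg₂ (· + ·) (sum_congr rfl fun i hi => ?_) (by simp)
    rw [Function.update_of_ne fun h => (mem_erase.mp hi).1 (Subtype.ext h)]
  simp only [hsplit]
  exact sum_range_two_pow_ite_dvd hf hdeg (not_dvd_natToPoly hf hdeg (mem_pi.mp hk d hd)) _ _

end dualSum

section BcritN

variable {m : ℕ} {f : (ZMod 2)[X]} (γ : Finset ℕ → ℝ) (a b : ℕ → ℝ)

lemma BcritN_succ (d : ℕ) (g : ℕ → ℕ) :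
    BcritN m γ a b f (d + 1) g = BcritN m γ a b f d g +
      ∑ v ∈ (range d).powerset,
        γ (insert d v) * (∏ i ∈ insert d v, (b i - a i)) * dualSum m f (insert d v) g := by
  rw [BcritN_eq_sum_dualSum, sum_filter_nonempty_powerset_range_succ, BcritN_eq_sum_dualSum]

lemma BcritN_update_self (d : ℕ) (g : ℕ → ℕ) (n : ℕ) :
    BcritN m γ a b f d (Function.update g d n) = BcritN m γ a b f d g := by
  simp only [BcritN_eq_sum_dualSum]
  refine sum_congr rfl fun u hu => ?_
  have hd : d ∉ u := fun h => notMem_range_self (mem_powerset.mp (mem_filter.mp hu).1 h)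
  rw [dualSum_update_of_notMem hd]

lemma sum_BcritN_succ_update (hf : Irreducible f) (hdeg : f.natDegree = m) (d : ℕ)
    (g : ℕ → ℕ) :
    ∑ n ∈ range (2 ^ m), BcritN m γ a b f (d + 1) (Function.update g d n) =
      2 ^ m * BcritN m γ a b f d g + ∑ v ∈ (range d).powerset,
        γ (insert d v) * ((m : ℝ) / 2) ^ (insert d v).card * ∏ i ∈ insert d v, (b i - a i) := by
  simp only [BcritN_succ, BcritN_update_self, sum_add_distrib, sum_const, card_range,
    nsmul_eq_mul, Nat.cast_pow, Nat.cast_ofNat]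
  rw [sum_comm]
  congr 1
  refine sum_congr rfl fun v _ => ?_
  rw [← mul_sum, sum_dualSum_update_of_mem hf hdeg (mem_insert_self d v)]
  ring

lemma two_pow_mul_BcritN_succ_le (hf : Irreducible f) (hdeg : f.natDegree = m) {d : ℕ}
    {g : ℕ → ℕ} (hmin : ∀ n < 2 ^ m,
      BcritN m γ a b f (d + 1) g ≤ BcritN m γ a b f (d + 1) (Function.update g d n)) :
    2 ^ m * BcritN m γ a b f (d + 1) g ≤
      2 ^ m * BcritN m γ a b f d g + ∑ v ∈ (range d).powerset,
        γ (insert d v) * ((m : ℝ) / 2) ^ (insert d v).card * ∏ i ∈ insert d v, (b i - a i) :=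
  calc 2 ^ m * BcritN m γ a b f (d + 1) g
      = ∑ _n ∈ range (2 ^ m), BcritN m γ a b f (d + 1) g := by simp
    _ ≤ ∑ n ∈ range (2 ^ m), BcritN m γ a b f (d + 1) (Function.update g d n) :=
      sum_le_sum fun n hn => hmin n (mem_range.mp hn)
    _ = _ := sum_BcritN_succ_update γ a b hf hdeg d g

end BcritN

theorem cbc_bound_general (s m : ℕ)
    (γ : Finset ℕ → ℝ) (hγ : ∀ u, 0 < γ u) (a b : ℕ → ℝ) (hab : ∀ i, a i < b i)
    (f : Polynomial (ZMod 2)) (hf : Irreducible f) (hdeg : f.natDegree = m)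
    (gstar : ℕ → ℕ) (hg0 : gstar 0 = 1)
    (hmin : ∀ d, 1 ≤ d → d < s → ∀ g' < 2 ^ m,
      BcritN m γ a b f (d + 1) gstar ≤ BcritN m γ a b f (d + 1) (Function.update gstar d g')) :
    ∀ d, 1 ≤ d → d ≤ s →
      BcritN m γ a b f d gstar ≤
        (1 / 2 ^ m) *
          ∑ u ∈ (Finset.range d).powerset.filter (fun u => u.Nonempty),
            γ u * ((m : ℝ) / 2) ^ u.card * ∏ i ∈ u, (b i - a i) := by
  intro d hd hds
  rw [one_div_mul_eq_div, le_div_iff₀' (by positivity)]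
  induction d, hd using Nat.le_induction with
  | base =>
    rw [BcritN_one_eq_zero hf hdeg γ a b hg0, mul_zero]
    refine sum_nonneg fun u _ => ?_
    have := hγ u
    have := prod_pos fun i (_ : i ∈ u) => sub_pos.mpr (hab i)
    positivity
  | succ d hd ih =>
    calc 2 ^ m * BcritN m γ a b f (d + 1) gstar
        ≤ 2 ^ m * BcritN m γ a b f d gstar + ∑ v ∈ (range d).powerset,
            γ (insert d v) * ((m : ℝ) / 2) ^ (insert d v).card * ∏ i ∈ insert d v, (b i - a i) :=
          two_pow_mul_BcritN_succ_le γ a b hf hdeg (hmin d hd (by omega))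
      _ ≤ _ := by
        rw [sum_filter_nonempty_powerset_range_succ]
        exact add_le_add_left (ih (by omega)) _

theorem cbc_bound (s m : ℕ) (hs : 1 ≤ s) (hm : 1 ≤ m)
    (γ : Finset ℕ → ℝ) (hγ : ∀ u, 0 < γ u) (a b : ℕ → ℝ) (hab : ∀ i, a i < b i)
    (f : Polynomial (ZMod 2)) (hf : Irreducible f) (hdeg : f.natDegree = m)
    (gstar : ℕ → ℕ) (hg0 : gstar 0 = 1) (hgG : ∀ i, i < s → gstar i < 2 ^ m)
    (hmin : ∀ d, 1 ≤ d → d < s → ∀ g' < 2 ^ m,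
      BcritN m γ a b f (d + 1) gstar ≤ BcritN m γ a b f (d + 1) (Function.update gstar d g')) :
    ∀ d, 1 ≤ d → d ≤ s →
      BcritN m γ a b f d gstar ≤
        (1 / 2 ^ m) *
          ∑ u ∈ (Finset.range d).powerset.filter (fun u => u.Nonempty),
            γ u * ((m : ℝ) / 2) ^ u.card * ∏ i ∈ u, (b i - a i) :=
  cbc_bound_general s m γ hγ a b hab f hf hdeg gstar hg0 hmin
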